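/- arXiv:1702.01919 — 3 statements merged into one kernel-verified Lean document; each statement's English description precedes it below -/
import Mathlib

section
/- Let u : ℝ² → ℂ and v : ℝ² → ℝ² with u differentiable, and let N > 0. Define the supercurrent j := ⟨∇u, iu⟩ (where ⟨x,y⟩ = Re(x conj(y)) componentwise in the gradient). Then pointwise |j - N v| ≤ |∇u - iuNv| + |∇u - iuNv| · |1 - |u|²| + N |v| · |1 - |u|²|. -/
open Complex

/-- `⟨x, y⟩ := Re (x * conj y)` for complex numbers. -/
def cip (x y : ℂ) : ℝ := (x * (starRingEnd ℂ) y).re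

/-! Writing `w = ∇u - iuNv`, one has `j - Nv = ⟨w, iu⟩ + Nv (|u|² - 1)` componentwise, since
`⟨iu, iu⟩ = |u|²`. Cauchy–Schwarz bounds the first term by `|u| |w|`, and `|u| ≤ 1 + |1 - |u|²|`. -/

lemma abs_cip_le (x y : ℂ) : |cip x y| ≤ ‖x‖ * ‖y‖ := by
  simpa [cip] using abs_re_le_norm (x * (starRingEnd ℂ) y)

lemma cip_sub_mul_ofReal (x y : ℂ) (t : ℝ) : cip (x - y * t) y = cip x y - t * ‖y‖ ^ 2 := by
  rw [cip, sub_mul, sub_re, mul_comm y, mul_assoc, mul_conj, normSq_eq_norm_sq,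
    ← ofReal_mul, ofReal_re, cip]

lemma Real.sqrt_add_sq_add_sq_le (a b c d : ℝ) :
    √((a + b) ^ 2 + (c + d) ^ 2) ≤ √(a ^ 2 + c ^ 2) + √(b ^ 2 + d ^ 2) := by
  have h := norm_add_le ((a : ℂ) + c * I) ((b : ℂ) + d * I)
  rwa [show (a : ℂ) + c * I + (b + d * I) = ((a + b : ℝ) : ℂ) + ((c + d : ℝ) : ℂ) * I by
      push_cast; ring, norm_add_mul_I, norm_add_mul_I, norm_add_mul_I] at h

lemma Real.sqrt_sq_add_sq_le_of_abs_le {a₁ a₂ b₁ b₂ r : ℝ} (hr : 0 ≤ r)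
    (h₁ : |a₁| ≤ b₁ * r) (h₂ : |a₂| ≤ b₂ * r) :
    √(a₁ ^ 2 + a₂ ^ 2) ≤ r * √(b₁ ^ 2 + b₂ ^ 2) := by
  rw [← Real.sqrt_sq hr, ← Real.sqrt_mul (sq_nonneg r)]
  refine Real.sqrt_le_sqrt ?_
  nlinarith [sq_abs a₁, sq_abs a₂, abs_nonneg a₁, abs_nonneg a₂]

lemma le_one_add_abs_one_sub_sq {r : ℝ} (hr : 0 ≤ r) : r ≤ 1 + |1 - r ^ 2| := by
  rcases abs_cases (1 - r ^ 2) with ⟨h, _⟩ | ⟨h, _⟩ <;> rw [h] <;> nlinarith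

lemma sqrt_cip_sub_le (d₁ d₂ y : ℂ) (t₁ t₂ : ℝ) :
    √((cip d₁ y - t₁) ^ 2 + (cip d₂ y - t₂) ^ 2) ≤
      ‖y‖ * √(‖d₁ - y * t₁‖ ^ 2 + ‖d₂ - y * t₂‖ ^ 2)
        + √(t₁ ^ 2 + t₂ ^ 2) * |1 - ‖y‖ ^ 2| := by
  have hsplit (d : ℂ) (t : ℝ) : cip d y - t = cip (d - y * t) y + t * (‖y‖ ^ 2 - 1) := by
    rw [cip_sub_mul_ofReal]; ring
  have hrest : √((t₁ * (‖y‖ ^ 2 - 1)) ^ 2 + (t₂ * (‖y‖ ^ 2 - 1)) ^ 2)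
      = √(t₁ ^ 2 + t₂ ^ 2) * |1 - ‖y‖ ^ 2| := by
    rw [show (t₁ * (‖y‖ ^ 2 - 1)) ^ 2 + (t₂ * (‖y‖ ^ 2 - 1)) ^ 2
        = (t₁ ^ 2 + t₂ ^ 2) * (1 - ‖y‖ ^ 2) ^ 2 by ring,
      Real.sqrt_mul (by positivity), Real.sqrt_sq_eq_abs]
  calc √((cip d₁ y - t₁) ^ 2 + (cip d₂ y - t₂) ^ 2)
      ≤ √(cip (d₁ - y * t₁) y ^ 2 + cip (d₂ - y * t₂) y ^ 2)
        + √((t₁ * (‖y‖ ^ 2 - 1)) ^ 2 + (t₂ * (‖y‖ ^ 2 - 1)) ^ 2) := by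
        rw [hsplit, hsplit]; exact Real.sqrt_add_sq_add_sq_le _ _ _ _
    _ ≤ _ := by
        rw [hrest]
        gcongr
        exact Real.sqrt_sq_add_sq_le_of_abs_le (norm_nonneg y) (abs_cip_le _ _)
          (abs_cip_le _ _)

theorem stmt0_general (u : ℝ × ℝ → ℂ) (v₁ v₂ : ℝ × ℝ → ℝ) (N : ℝ) (hN : 0 < N)
    (p : ℝ × ℝ) :
    let d₁ := fderiv ℝ u p (1, 0)
    let d₂ := fderiv ℝ u p (0, 1)
    let j₁ := cip d₁ (Complex.I * u p)
    let j₂ := cip d₂ (Complex.I * u p)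
    let modg := Real.sqrt (‖d₁ - Complex.I * u p * (N * v₁ p)‖ ^ 2
      + ‖d₂ - Complex.I * u p * (N * v₂ p)‖ ^ 2)
    Real.sqrt ((j₁ - N * v₁ p) ^ 2 + (j₂ - N * v₂ p) ^ 2) ≤
      modg + modg * |1 - ‖u p‖ ^ 2|
        + N * Real.sqrt (v₁ p ^ 2 + v₂ p ^ 2) * |1 - ‖u p‖ ^ 2| := by
  intro d₁ d₂ j₁ j₂ modg
  have hbound := sqrt_cip_sub_le d₁ d₂ (I * u p) (N * v₁ p) (N * v₂ p)
  have hv : √((N * v₁ p) ^ 2 + (N * v₂ p) ^ 2) = N * √(v₁ p ^ 2 + v₂ p ^ 2) := by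
    rw [show (N * v₁ p) ^ 2 + (N * v₂ p) ^ 2 = N ^ 2 * (v₁ p ^ 2 + v₂ p ^ 2) by ring,
      Real.sqrt_mul (sq_nonneg N), Real.sqrt_sq hN.le]
  simp only [norm_mul, norm_I, one_mul, ofReal_mul, hv] at hbound
  have hnorm : ‖u p‖ * modg ≤ modg + modg * |1 - ‖u p‖ ^ 2| :=
    calc ‖u p‖ * modg ≤ (1 + |1 - ‖u p‖ ^ 2|) * modg :=
          mul_le_mul_of_nonneg_right (le_one_add_abs_one_sub_sq (norm_nonneg _))
            (Real.sqrt_nonneg _)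
      _ = modg + modg * |1 - ‖u p‖ ^ 2| := by ring
  exact hbound.trans (by linarith)

/-- Pointwise estimate on the supercurrent `j = ⟨∇u, iu⟩`:
`|j - N v| ≤ |∇u - iuNv| + |∇u - iuNv| |1-|u|²| + N |v| |1-|u|²|`. -/
theorem stmt0 (u : ℝ × ℝ → ℂ) (v₁ v₂ : ℝ × ℝ → ℝ) (N : ℝ) (hN : 0 < N)
    (hu : Differentiable ℝ u) (p : ℝ × ℝ) :
    let d₁ := fderiv ℝ u p (1, 0)
    let d₂ := fderiv ℝ u p (0, 1)
    let j₁ := cip d₁ (Complex.I * u p)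
    let j₂ := cip d₂ (Complex.I * u p)
    let modg := Real.sqrt (‖d₁ - Complex.I * u p * (N * v₁ p)‖ ^ 2
      + ‖d₂ - Complex.I * u p * (N * v₂ p)‖ ^ 2)
    Real.sqrt ((j₁ - N * v₁ p) ^ 2 + (j₂ - N * v₂ p) ^ 2) ≤
      modg + modg * |1 - ‖u p‖ ^ 2|
        + N * Real.sqrt (v₁ p ^ 2 + v₂ p ^ 2) * |1 - ‖u p‖ ^ 2| :=
  stmt0_general u v₁ v₂ N hN p
end

section
/- Weighted Delort identity: let a : ℝ² → (0,∞) be C¹ and w : ℝ² → ℝ² be C¹. Then pointwise w curl w = a⁻¹ w^⊥ div(aw) - (1/2) a⁻¹ |w|² ∇^⊥ a - a⁻¹ (div(a S_w))^⊥, where S_w := w ⊗ w - (1/2)|w|² Id is the stress-energy tensor and (div T)ₖ := Σₗ ∂ₗ Tₖₗ. -/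
/-!
Expanding with the Leibniz rule, `div (a w) = a div w + w · ∇a` and
`div (a S_w) = a div S_w + S_w ∇a`, while the unweighted stress tensor satisfies the classical
Delort identity `div S_w = w div w + w^⊥ curl w`. Taking `^⊥` of the latter and using
`(w^⊥)^⊥ = -w`, the terms `w^⊥ div w` cancel, and the weight terms cancel because
`(S_w ∇a)^⊥ = w^⊥ (w · ∇a) - ½ |w|² ∇^⊥a`. What is left is `a w curl w`.
-/

theorem fderiv_fun_mul_apply {E : Type*} [NormedAddCommGroup E] [NormedSpace ℝ E]
    {f g : E → ℝ} {p : E} (hf : DifferentiableAt ℝ f p) (hg : DifferentiableAt ℝ g p) (v : E) :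
    fderiv ℝ (fun q => f q * g q) p v = f p * fderiv ℝ g p v + g p * fderiv ℝ f p v := by
  rw [fderiv_fun_mul hf hg]
  rfl

theorem divergence_mul_eq {a f g : ℝ × ℝ → ℝ} {p : ℝ × ℝ} (ha : DifferentiableAt ℝ a p) (hf : DifferentiableAt ℝ f p)
    (hg : DifferentiableAt ℝ g p) :
    fderiv ℝ (fun q => a q * f q) p (1, 0) + fderiv ℝ (fun q => a q * g q) p (0, 1) =
      a p * (fderiv ℝ f p (1, 0) + fderiv ℝ g p (0, 1)) +
        (f p * fderiv ℝ a p (1, 0) + g p * fderiv ℝ a p (0, 1)) := by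
  rw [fderiv_fun_mul_apply ha hf, fderiv_fun_mul_apply ha hg]
  ring

section Stress

variable {w₁ w₂ : ℝ × ℝ → ℝ} {p : ℝ × ℝ}

theorem fderiv_stress_diag_apply (h1 : DifferentiableAt ℝ w₁ p) (h2 : DifferentiableAt ℝ w₂ p)
    (v : ℝ × ℝ) :
    fderiv ℝ (fun q => w₁ q * w₁ q - (1/2) * (w₁ q ^ 2 + w₂ q ^ 2)) p v =
      w₁ p * fderiv ℝ w₁ p v - w₂ p * fderiv ℝ w₂ p v := by
  simp only [pow_two]
  rw [fderiv_fun_sub (by fun_prop) (by fun_prop), fderiv_const_mul (by fun_prop),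
    fderiv_fun_add (by fun_prop) (by fun_prop)]
  simp only [sub_apply, smul_apply, add_apply, fderiv_fun_mul_apply h1 h1,
    fderiv_fun_mul_apply h2 h2, smul_eq_mul]
  ring

theorem divergence_stress_fst (h1 : DifferentiableAt ℝ w₁ p) (h2 : DifferentiableAt ℝ w₂ p) :
    fderiv ℝ (fun q => w₁ q * w₁ q - (1/2) * (w₁ q ^ 2 + w₂ q ^ 2)) p (1, 0) +
        fderiv ℝ (fun q => w₁ q * w₂ q) p (0, 1) =
      w₁ p * (fderiv ℝ w₁ p (1, 0) + fderiv ℝ w₂ p (0, 1)) -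
        w₂ p * (fderiv ℝ w₂ p (1, 0) - fderiv ℝ w₁ p (0, 1)) := by
  rw [fderiv_stress_diag_apply h1 h2, fderiv_fun_mul_apply h1 h2]
  ring

theorem divergence_stress_snd (h1 : DifferentiableAt ℝ w₁ p) (h2 : DifferentiableAt ℝ w₂ p) :
    fderiv ℝ (fun q => w₂ q * w₁ q) p (1, 0) +
        fderiv ℝ (fun q => w₂ q * w₂ q - (1/2) * (w₁ q ^ 2 + w₂ q ^ 2)) p (0, 1) =
      w₂ p * (fderiv ℝ w₁ p (1, 0) + fderiv ℝ w₂ p (0, 1)) +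
        w₁ p * (fderiv ℝ w₂ p (1, 0) - fderiv ℝ w₁ p (0, 1)) := by
  have h := fderiv_stress_diag_apply h2 h1 (0, 1)
  simp only [add_comm (w₂ _ ^ 2)] at h
  rw [h, fderiv_fun_mul_apply h2 h1]
  ring

end Stress

/-- Weighted Delort identity: for a C¹ weight `a > 0` and a C¹ vector field `w` on `ℝ²`,
`w curl w = a⁻¹ w^⊥ div(aw) - (1/2) a⁻¹ |w|² ∇^⊥a - a⁻¹ (div(a S_w))^⊥`
where `S_w = w ⊗ w - (1/2)|w|² Id`, stated componentwise. -/
theorem stmt5 (a w₁ w₂ : ℝ × ℝ → ℝ) (hapos : ∀ q, 0 < a q)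
    (ha : ContDiff ℝ 1 a) (h1 : ContDiff ℝ 1 w₁) (h2 : ContDiff ℝ 1 w₂)
    (p : ℝ × ℝ) :
    let pd : (ℝ × ℝ → ℝ) → ℝ × ℝ → ℝ := fun f e => fderiv ℝ f p e
    let curl := pd w₂ (1, 0) - pd w₁ (0, 1)
    let divaw := pd (fun q => a q * w₁ q) (1, 0) + pd (fun q => a q * w₂ q) (0, 1)
    let S11 : ℝ × ℝ → ℝ := fun q => w₁ q * w₁ q - (1/2) * (w₁ q ^ 2 + w₂ q ^ 2)
    let S12 : ℝ × ℝ → ℝ := fun q => w₁ q * w₂ q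
    let S21 : ℝ × ℝ → ℝ := fun q => w₂ q * w₁ q
    let S22 : ℝ × ℝ → ℝ := fun q => w₂ q * w₂ q - (1/2) * (w₁ q ^ 2 + w₂ q ^ 2)
    let d₁ := pd (fun q => a q * S11 q) (1, 0) + pd (fun q => a q * S12 q) (0, 1)
    let d₂ := pd (fun q => a q * S21 q) (1, 0) + pd (fun q => a q * S22 q) (0, 1)
    let nsq := w₁ p ^ 2 + w₂ p ^ 2
    w₁ p * curl = (a p)⁻¹ * (-(w₂ p)) * divaw
        - (1/2) * (a p)⁻¹ * nsq * (-(pd a (0, 1))) - (a p)⁻¹ * (-(d₂)) ∧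
      w₂ p * curl = (a p)⁻¹ * (w₁ p) * divaw
        - (1/2) * (a p)⁻¹ * nsq * (pd a (1, 0)) - (a p)⁻¹ * d₁ := by
  have hda : DifferentiableAt ℝ a p := ha.differentiable one_ne_zero p
  have hd1 : DifferentiableAt ℝ w₁ p := h1.differentiable one_ne_zero p
  have hd2 : DifferentiableAt ℝ w₂ p := h2.differentiable one_ne_zero p
  have ha0 : a p ≠ 0 := (hapos p).ne'
  intro pd curl divaw S11 S12 S21 S22 d₁ d₂ nsq
  simp only [pd, curl, divaw, d₁, d₂, S11, S12, S21, S22, nsq]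
  rw [divergence_mul_eq hda hd1 hd2, divergence_mul_eq hda (by fun_prop) (by fun_prop),
    divergence_mul_eq hda (by fun_prop) (by fun_prop), divergence_stress_fst hd1 hd2,
    divergence_stress_snd hd1 hd2]
  constructor <;> (field_simp; ring)
end

section
/- Existence of a smooth cut-off with square-root gradient bound: there exists a C^∞ function χ : ℝ² → [0,1] with χ = 1 on the unit ball B₁, χ = 0 outside B₂, and a constant C such that |∇χ| ≤ C χ^{1/2}(1-χ)^{1/2} pointwise on ℝ². -/
/-!
Take `χ x = smoothTransition (2 - ‖x‖)`, where `smoothTransition = a / (a + b)` with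
`a = expNegInvGlue` and `b = expNegInvGlue (1 - ·)`. The glue function satisfies
`(e^{-1/t})' = t⁻² e^{-1/t} ≤ 8 (e^{-1/t})^{1/2}`, and `a + b ≥ e^{-2}` everywhere, so the quotient
rule gives `|smoothTransition'| ≲ √a √b / (a + b) = √χ √(1 - χ)`. Composing with the
`1`-Lipschitz function `2 - ‖x‖` preserves the bound; near the origin `χ ≡ 1`.
-/

open Real Topology

theorem expNegInvGlue.hasDerivAt (t : ℝ) :
    HasDerivAt expNegInvGlue (t⁻¹ ^ 2 * expNegInvGlue t) t := by
  simpa using expNegInvGlue.hasDerivAt_polynomial_eval_inv_mul 1 t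

theorem expNegInvGlue.sq_inv_mul_le (t : ℝ) :
    t⁻¹ ^ 2 * expNegInvGlue t ≤ 8 * √(expNegInvGlue t) := by
  rcases le_or_gt t 0 with ht | ht
  · simp [expNegInvGlue.zero_of_nonpos ht]
  set u := t⁻¹
  have hu : 0 < u := inv_pos.2 ht
  have hglue : expNegInvGlue t = exp (-u) := by simp [expNegInvGlue, not_le.2 ht, u]
  have hsq : u ^ 2 ≤ 8 * exp (u / 2) := by
    have := pow_div_factorial_le_exp (x := u / 2) (by positivity) 2
    norm_num [Nat.factorial] at this
    linarith
  calc u ^ 2 * expNegInvGlue t ≤ 8 * exp (u / 2) * exp (-u) := by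
        rw [hglue]; gcongr
    _ = 8 * √(expNegInvGlue t) := by
        rw [hglue, ← exp_half, mul_assoc, ← exp_add]; ring_nf

theorem expNegInvGlue.exp_neg_two_le_add (x : ℝ) :
    exp (-2) ≤ expNegInvGlue x + expNegInvGlue (1 - x) := by
  have half : expNegInvGlue (1 / 2) = exp (-2) := by simp [expNegInvGlue]
  rcases le_total (1 / 2) x with hx | hx
  · linarith [expNegInvGlue.monotone hx, expNegInvGlue.nonneg (1 - x)]
  · linarith [expNegInvGlue.monotone (show 1 / 2 ≤ 1 - x by linarith), expNegInvGlue.nonneg x]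

theorem mul_add_mul_div_add_sq_le {a b a' b' K c : ℝ} (ha : 0 ≤ a) (hb : 0 ≤ b) (hK : 0 ≤ K)
    (hc : 0 < c) (hab : c ≤ a + b) (ha' : a' ≤ K * √a) (hb' : b' ≤ K * √b) :
    (a' * b + a * b') / (a + b) ^ 2 ≤ 2 * K / √c * √(a / (a + b)) * √(b / (a + b)) := by
  have hs : 0 < a + b := hc.trans_le hab
  have hσc : √c ≤ √(a + b) := sqrt_le_sqrt hab
  have hsqa : √a ≤ √(a + b) := sqrt_le_sqrt (by linarith)
  have hsqb : √b ≤ √(a + b) := sqrt_le_sqrt (by linarith)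
  have hσ2 : √(a + b) ^ 2 = a + b := sq_sqrt hs.le
  have numer : a' * b + a * b' ≤ 2 * K * √a * √b * √(a + b) := by
    calc a' * b + a * b' ≤ K * √a * b + a * (K * √b) := by gcongr
      _ = K * √a * √b * (√a + √b) := by
          rw [← sq_sqrt ha, ← sq_sqrt hb]; simp only [sqrt_sq (sqrt_nonneg _)]; ring
      _ ≤ K * √a * √b * (2 * √(a + b)) := by gcongr; linarith
      _ = _ := by ring
  have rhs : 2 * K / √c * (√a / √(a + b)) * (√b / √(a + b)) * (a + b) ^ 2
      = 2 * K * √a * √b * (√(a + b) * √(a + b)) / √c := by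
    field_simp
    rw [show √(a + b) ^ 4 = (√(a + b) ^ 2) ^ 2 by ring, hσ2]
  rw [sqrt_div' _ hs.le, sqrt_div' _ hs.le, div_le_iff₀ (by positivity), rhs,
    le_div_iff₀ (sqrt_pos.2 hc)]
  calc (a' * b + a * b') * √c ≤ 2 * K * √a * √b * √(a + b) * √(a + b) := by
        gcongr
    _ = _ := by ring

namespace Real.smoothTransition

theorem hasDerivAt (x : ℝ) :
    HasDerivAt smoothTransition
      ((x⁻¹ ^ 2 * expNegInvGlue x * expNegInvGlue (1 - x) +
          expNegInvGlue x * ((1 - x)⁻¹ ^ 2 * expNegInvGlue (1 - x))) /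
        (expNegInvGlue x + expNegInvGlue (1 - x)) ^ 2) x := by
  have hb : HasDerivAt (fun y ↦ expNegInvGlue (1 - y))
      (-((1 - x)⁻¹ ^ 2 * expNegInvGlue (1 - x))) x := by
    refine ((expNegInvGlue.hasDerivAt (1 - x)).comp x
      ((hasDerivAt_id' x).const_sub 1)).congr_deriv ?_
    ring
  refine ((expNegInvGlue.hasDerivAt x).fun_div ((expNegInvGlue.hasDerivAt x).fun_add hb)
    (pos_denom x).ne').congr_deriv ?_
  ring

theorem abs_deriv_le (x : ℝ) :
    |deriv smoothTransition x| ≤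
      16 * exp 1 * √(smoothTransition x) * √(1 - smoothTransition x) := by
  set a := expNegInvGlue x
  set b := expNegInvGlue (1 - x)
  have ha := expNegInvGlue.nonneg x
  have hb := expNegInvGlue.nonneg (1 - x)
  have hs : smoothTransition x = a / (a + b) := rfl
  have hs' : 1 - smoothTransition x = b / (a + b) := by
    rw [hs, one_sub_div (pos_denom x).ne']; ring
  rw [(hasDerivAt x).deriv, abs_of_nonneg (by positivity), hs', hs]
  calc _ ≤ 2 * 8 / √(exp (-2)) * √(a / (a + b)) * √(b / (a + b)) :=
        mul_add_mul_div_add_sq_le ha hb (by norm_num) (exp_pos _)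
          (expNegInvGlue.exp_neg_two_le_add x) (expNegInvGlue.sq_inv_mul_le x)
          (expNegInvGlue.sq_inv_mul_le (1 - x))
    _ = _ := by
        rw [← exp_half, show (-2 : ℝ) / 2 = -1 by norm_num, exp_neg, div_inv_eq_mul]
        ring

end Real.smoothTransition

theorem norm_fderiv_smoothTransition_comp_le {E : Type*} [NormedAddCommGroup E]
    [NormedSpace ℝ E] {f : E → ℝ} {x : E} (hf : DifferentiableAt ℝ f x) :
    ‖fderiv ℝ (fun y ↦ smoothTransition (f y)) x‖ ≤
      16 * exp 1 * ‖fderiv ℝ f x‖ * √(smoothTransition (f x)) *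
        √(1 - smoothTransition (f x)) := by
  have hcomp : HasFDerivAt (fun y ↦ smoothTransition (f y)) _ x :=
    (smoothTransition.hasDerivAt (f x)).differentiableAt.hasDerivAt.comp_hasFDerivAt x
      hf.hasFDerivAt
  rw [hcomp.fderiv, norm_smul, norm_eq_abs]
  calc _ ≤ 16 * exp 1 * √(smoothTransition (f x)) * √(1 - smoothTransition (f x)) *
        ‖fderiv ℝ f x‖ := by gcongr; exact smoothTransition.abs_deriv_le (f x)
    _ = _ := by ring

section radialCutoff

variable {E : Type*} [NormedAddCommGroup E] {r R : ℝ}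

noncomputable def radialCutoff (r R : ℝ) (x : E) : ℝ :=
  smoothTransition ((R - ‖x‖) / (R - r))

theorem radialCutoff_mem_Icc (x : E) : radialCutoff r R x ∈ Set.Icc 0 1 :=
  ⟨smoothTransition.nonneg _, smoothTransition.le_one _⟩

theorem radialCutoff_eq_one (hrR : r < R) {x : E} (hx : ‖x‖ ≤ r) : radialCutoff r R x = 1 :=
  smoothTransition.one_of_one_le <| (one_le_div (sub_pos.2 hrR)).2 (by linarith)

theorem radialCutoff_eq_zero (hrR : r ≤ R) {x : E} (hx : R ≤ ‖x‖) : radialCutoff r R x = 0 :=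
  smoothTransition.zero_of_nonpos <| div_nonpos_of_nonpos_of_nonneg (by linarith) (by linarith)

theorem radialCutoff_eventuallyEq_one (hr : 0 < r) (hrR : r < R) :
    radialCutoff r R =ᶠ[𝓝 (0 : E)] fun _ ↦ 1 := by
  filter_upwards [Metric.ball_mem_nhds (0 : E) hr] with y hy
  exact radialCutoff_eq_one hrR (mem_ball_zero_iff.1 hy).le

theorem norm_fderiv_radialProfile_le [NormedSpace ℝ E] (hrR : r ≤ R) (x : E) :
    ‖fderiv ℝ (fun y : E ↦ (R - ‖y‖) / (R - r)) x‖ ≤ (R - r)⁻¹ := by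
  refine norm_fderiv_le_of_lip' ℝ (inv_nonneg.2 (sub_nonneg.2 hrR))
    (Filter.Eventually.of_forall fun y ↦ ?_)
  rw [← sub_div, norm_div, div_eq_inv_mul, Real.norm_of_nonneg (sub_nonneg.2 hrR)]
  gcongr
  simpa [abs_sub_comm] using abs_norm_sub_norm_le y x

variable [InnerProductSpace ℝ E]

theorem contDiff_radialCutoff (hr : 0 < r) (hrR : r < R) {n : ℕ∞} :
    ContDiff ℝ n (radialCutoff (E := E) r R) := by
  rw [contDiff_iff_contDiffAt]
  intro x
  rcases eq_or_ne x 0 with rfl | hx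
  · exact contDiffAt_const.congr_of_eventuallyEq (radialCutoff_eventuallyEq_one hr hrR)
  · exact smoothTransition.contDiffAt.comp x
      ((contDiffAt_const.sub (contDiffAt_norm ℝ hx)).div_const _)

theorem norm_fderiv_radialCutoff_le (hr : 0 < r) (hrR : r < R) (x : E) :
    ‖fderiv ℝ (radialCutoff r R) x‖ ≤
      16 * exp 1 / (R - r) * √(radialCutoff r R x) * √(1 - radialCutoff r R x) := by
  rcases eq_or_ne x 0 with rfl | hx
  · rw [(radialCutoff_eventuallyEq_one hr hrR).fderiv_eq, fderiv_const_apply, norm_zero]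
    positivity
  have hprofile : DifferentiableAt ℝ (fun y : E ↦ (R - ‖y‖) / (R - r)) x :=
    ((differentiableAt_const R).sub (differentiableAt_id.norm ℝ hx)).mul_const (R - r)⁻¹
  calc _ ≤ 16 * exp 1 * ‖fderiv ℝ (fun y : E ↦ (R - ‖y‖) / (R - r)) x‖ *
          √(radialCutoff r R x) * √(1 - radialCutoff r R x) :=
        norm_fderiv_smoothTransition_comp_le hprofile
    _ ≤ 16 * exp 1 * (R - r)⁻¹ * √(radialCutoff r R x) * √(1 - radialCutoff r R x) := by
        gcongr; exact norm_fderiv_radialProfile_le hrR.le x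
    _ = _ := by ring

end radialCutoff

/-- Existence of a smooth cut-off `χ : ℝ² → [0,1]` with `χ = 1` on `B₁`, `χ = 0`
outside `B₂`, and `|∇χ| ≤ C χ^{1/2} (1 - χ)^{1/2}` pointwise. -/
theorem stmt13 : ∃ χ : EuclideanSpace ℝ (Fin 2) → ℝ,
    ContDiff ℝ (⊤ : ℕ∞) χ ∧
    (∀ x, χ x ∈ Set.Icc (0 : ℝ) 1) ∧
    (∀ x ∈ Metric.ball (0 : EuclideanSpace ℝ (Fin 2)) 1, χ x = 1) ∧
    (∀ x, x ∉ Metric.ball (0 : EuclideanSpace ℝ (Fin 2)) 2 → χ x = 0) ∧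
    ∃ C : ℝ, ∀ x, ‖fderiv ℝ χ x‖ ≤ C * Real.sqrt (χ x) * Real.sqrt (1 - χ x) := by
  refine ⟨radialCutoff 1 2, contDiff_radialCutoff one_pos one_lt_two, radialCutoff_mem_Icc,
    fun x hx ↦ radialCutoff_eq_one one_lt_two ?_, fun x hx ↦ radialCutoff_eq_zero one_le_two ?_,
    _, norm_fderiv_radialCutoff_le one_pos one_lt_two⟩
  · simpa using (mem_ball_zero_iff.1 hx).le
  · simpa using hx
end
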